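/- Let R = ∂B be a nondegenerate convex reflector with focal function p and radial function ρ. Then for every y ∈ Sⁿ, p(y) = sup_{x ∈ Sⁿ} ρ(x)(1 − ⟨x,y⟩), and this supremum is attained. -/

import Mathlib

open scoped InnerProductSpace ENNReal
open Metric Set

noncomputable section

/-- Euclidean space `ℝ^{n+1}`. -/
abbrev E (n : ℕ) : Type := EuclideanSpace ℝ (Fin (n + 1))

/-- The unit sphere `Sⁿ` centered at the origin in `ℝ^{n+1}`. -/
def sph (n : ℕ) : Set (E n) := Metric.sphere (0 : E n) 1

/-- `B` is the convex body of a nondegenerate convex reflector: `B` is the intersection of the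
solid confocal paraboloids `{X : ‖X‖ - ⟪X,y⟫ ≤ p̃ y}` for some `p̃ : Sⁿ → (0,∞]`
(encoded via `ENNReal`), `B` is compact and the origin is an interior point of `B`.
The reflector itself is `R = frontier B`. -/
def IsReflectorBody (n : ℕ) (B : Set (E n)) : Prop :=
  IsCompact B ∧ (0 : E n) ∈ interior B ∧
    ∃ pt : E n → ℝ≥0∞, (∀ y ∈ sph n, 0 < pt y) ∧
      B = {X : E n | ∀ y ∈ sph n, ENNReal.ofReal (‖X‖ - ⟪X, y⟫_ℝ) ≤ pt y}

/-- The focal function `p(y) = sup_{X ∈ B} (‖X‖ - ⟪X, y⟫)` of the reflector `∂B`. -/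
def focal (n : ℕ) (B : Set (E n)) (y : E n) : ℝ :=
  sSup ((fun X => ‖X‖ - ⟪X, y⟫_ℝ) '' B)

/-- The radial function `ρ(x) = sup {λ ≥ 0 : λ x ∈ B}`. -/
def radial (n : ℕ) (B : Set (E n)) (x : E n) : ℝ :=
  sSup {l : ℝ | 0 ≤ l ∧ l • x ∈ B}

/-- The support function `h(U) = sup_{X ∈ B} ⟪X, U⟫`. -/
def suppFn (n : ℕ) (B : Set (E n)) (U : E n) : ℝ :=
  sSup ((fun X => ⟪X, U⟫_ℝ) '' B)

/-- The extended focal function `P(Y) = sup_{X ∈ B} (‖X‖‖Y‖ - ⟪X, Y⟫)` on all of `ℝ^{n+1}`. -/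
def extFocal (n : ℕ) (B : Set (E n)) (Y : E n) : ℝ :=
  sSup ((fun X => ‖X‖ * ‖Y‖ - ⟪X, Y⟫_ℝ) '' B)

/-- The directrix `D(R) = {X - ‖X‖y : X ∈ R, y ∈ Sⁿ, ‖X‖ - ⟪X,y⟫ = p(y)}` of the
reflector `R = frontier B`. -/
def directrix (n : ℕ) (B : Set (E n)) : Set (E n) :=
  {Z : E n | ∃ X ∈ frontier B, ∃ y ∈ sph n,
    ‖X‖ - ⟪X, y⟫_ℝ = focal n B y ∧ Z = X - ‖X‖ • y}

/-!
The maximum of `X ↦ ‖X‖ - ⟪X, y⟫` over the compact body `B` is attained at some `X₀`, and it is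
positive because `B` contains a small multiple of `-y`; hence `X₀ ≠ 0`. On a ray `l • x` with
`‖x‖ = 1` that function equals `l * (1 - ⟪x, y⟫)`, so the point `ρ(x) x ∈ B` gives
`ρ(x)(1 - ⟪x, y⟫) ≤ p(y)`, while for `x = X₀ / ‖X₀‖` the inequality `‖X₀‖ ≤ ρ(x)` gives the reverse.
-/

section InnerProductSpace

variable {F : Type*} [NormedAddCommGroup F] [InnerProductSpace ℝ F]

theorem norm_smul_sub_inner_smul {l : ℝ} (hl : 0 ≤ l) {x : F} (hx : ‖x‖ = 1) (y : F) :
    ‖l • x‖ - ⟪l • x, y⟫_ℝ = l * (1 - ⟪x, y⟫_ℝ) := by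
  rw [norm_smul, hx, real_inner_smul_left, Real.norm_of_nonneg hl]
  ring

theorem norm_mul_one_sub_inner_inv_norm_smul (X y : F) :
    ‖X‖ * (1 - ⟪‖X‖⁻¹ • X, y⟫_ℝ) = ‖X‖ - ⟪X, y⟫_ℝ := by
  rcases eq_or_ne X 0 with rfl | hX
  · simp
  · rw [real_inner_smul_left, mul_sub, mul_one, ← mul_assoc,
      mul_inv_cancel₀ (norm_ne_zero_iff.mpr hX), one_mul]

theorem one_sub_real_inner_nonneg {x y : F} (hx : ‖x‖ = 1) (hy : ‖y‖ = 1) :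
    0 ≤ 1 - ⟪x, y⟫_ℝ := by
  simpa [hx, hy] using real_inner_le_norm x y

end InnerProductSpace

variable {n : ℕ} {B : Set (E n)}

theorem norm_eq_one_of_mem_sph {x : E n} (hx : x ∈ sph n) : ‖x‖ = 1 :=
  mem_sphere_zero_iff_norm.mp hx

theorem isGreatest_radial (hBc : IsCompact B) (h0 : (0 : E n) ∈ B) {x : E n} (hx : x ≠ 0) :
    IsGreatest {l : ℝ | 0 ≤ l ∧ l • x ∈ B} (radial n B x) := by
  obtain ⟨R, hR⟩ := hBc.isBounded.exists_norm_le
  have hbdd : BddAbove {l : ℝ | 0 ≤ l ∧ l • x ∈ B} := by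
    refine ⟨R / ‖x‖, fun l hl => (le_div_iff₀ (norm_pos_iff.mpr hx)).mpr ?_⟩
    simpa [norm_smul, Real.norm_of_nonneg hl.1] using hR _ hl.2
  have hclosed : IsClosed {l : ℝ | 0 ≤ l ∧ l • x ∈ B} :=
    isClosed_Ici.inter (hBc.isClosed.preimage (continuous_id.smul continuous_const))
  exact ⟨hclosed.csSup_mem ⟨0, le_rfl, by simpa using h0⟩ hbdd, fun l hl => le_csSup hbdd hl⟩

theorem le_focal (hBc : IsCompact B) (y : E n) {X : E n} (hX : X ∈ B) :
    ‖X‖ - ⟪X, y⟫_ℝ ≤ focal n B y :=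
  le_csSup ((hBc.image (by fun_prop)).bddAbove) (mem_image_of_mem _ hX)

theorem exists_mem_focal_eq (hBc : IsCompact B) (hne : B.Nonempty) (y : E n) :
    ∃ X ∈ B, ‖X‖ - ⟪X, y⟫_ℝ = focal n B y :=
  ((hBc.image (f := fun X => ‖X‖ - ⟪X, y⟫_ℝ) (by fun_prop)).isGreatest_sSup (hne.image _)).1

theorem focal_pos (hBc : IsCompact B) (h0 : (0 : E n) ∈ interior B) {y : E n} (hy : ‖y‖ = 1) :
    0 < focal n B y := by
  obtain ⟨ε, hε, hball⟩ := Metric.mem_nhds_iff.mp (mem_interior_iff_mem_nhds.mp h0)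
  have hmem : (ε / 2) • (-y) ∈ B := hball <| by
    rw [mem_ball_zero_iff, norm_smul, norm_neg, hy, mul_one, Real.norm_of_nonneg (by positivity)]
    linarith
  calc (0 : ℝ) < ε := hε
    _ = ‖(ε / 2) • (-y)‖ - ⟪(ε / 2) • (-y), y⟫_ℝ := by
      rw [norm_smul_sub_inner_smul (by positivity) (by rwa [norm_neg]), inner_neg_left,
        real_inner_self_eq_norm_sq, hy]
      ring
    _ ≤ focal n B y := le_focal hBc y hmem

theorem radial_mul_le_focal (hBc : IsCompact B) (h0 : (0 : E n) ∈ B) {x : E n} (hx : ‖x‖ = 1)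
    (y : E n) : radial n B x * (1 - ⟪x, y⟫_ℝ) ≤ focal n B y := by
  obtain ⟨⟨hρ0, hρB⟩, -⟩ := isGreatest_radial hBc h0 (x := x) (by rintro rfl; simp at hx)
  rw [← norm_smul_sub_inner_smul hρ0 hx]
  exact le_focal hBc y hρB

theorem statement3_general (n : ℕ) (B : Set (E n)) (hB : IsReflectorBody n B)
    (y : E n) (hy : y ∈ sph n) :
    (∀ x ∈ sph n, radial n B x * (1 - ⟪x, y⟫_ℝ) ≤ focal n B y) ∧
    (∃ x ∈ sph n, radial n B x * (1 - ⟪x, y⟫_ℝ) = focal n B y) := by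
  obtain ⟨hBc, h0, -⟩ := hB
  have h0B : (0 : E n) ∈ B := interior_subset h0
  have hle : ∀ x ∈ sph n, radial n B x * (1 - ⟪x, y⟫_ℝ) ≤ focal n B y := fun x hx =>
    radial_mul_le_focal hBc h0B (norm_eq_one_of_mem_sph hx) y
  refine ⟨hle, ?_⟩
  obtain ⟨X₀, hX₀B, hX₀⟩ := exists_mem_focal_eq hBc ⟨0, h0B⟩ y
  have hX₀ne : X₀ ≠ 0 := by
    rintro rfl
    simpa [← hX₀] using focal_pos hBc h0 (norm_eq_one_of_mem_sph hy)
  have hX₀norm : ‖X₀‖ ≠ 0 := norm_ne_zero_iff.mpr hX₀ne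
  set x := ‖X₀‖⁻¹ • X₀ with hx
  have hsph : x ∈ sph n := mem_sphere_zero_iff_norm.mpr (norm_smul_inv_norm hX₀ne)
  refine ⟨x, hsph, le_antisymm (hle x hsph) ?_⟩
  have hρ : ‖X₀‖ ≤ radial n B x :=
    (isGreatest_radial hBc h0B (smul_ne_zero (inv_ne_zero hX₀norm) hX₀ne)).2
      ⟨norm_nonneg _, by rwa [smul_inv_smul₀ hX₀norm]⟩
  calc focal n B y = ‖X₀‖ * (1 - ⟪x, y⟫_ℝ) := by
        rw [hx, norm_mul_one_sub_inner_inv_norm_smul, hX₀]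
    _ ≤ radial n B x * (1 - ⟪x, y⟫_ℝ) :=
        mul_le_mul_of_nonneg_right hρ
          (one_sub_real_inner_nonneg (norm_eq_one_of_mem_sph hsph) (norm_eq_one_of_mem_sph hy))

/-- For every `y ∈ Sⁿ`, `p(y) = sup_{x ∈ Sⁿ} ρ(x)(1 - ⟪x,y⟫)`,
and this supremum is attained. -/
theorem statement3 (n : ℕ) (hn : 1 ≤ n) (B : Set (E n)) (hB : IsReflectorBody n B)
    (y : E n) (hy : y ∈ sph n) :
    (∀ x ∈ sph n, radial n B x * (1 - ⟪x, y⟫_ℝ) ≤ focal n B y) ∧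
    (∃ x ∈ sph n, radial n B x * (1 - ⟪x, y⟫_ℝ) = focal n B y) :=
  statement3_general n B hB y hy
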